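/- Let 0 < α < 1 and let f = h + conj(g) be a harmonic K-quasiregular mapping on the unit disk 𝔻 (so h, g are holomorphic on 𝔻 and |g'(z)| ≤ k·|h'(z)| on 𝔻 for some k ∈ [0,1)), with u = Re f and v = Im f. Suppose u extends continuously to the closed unit disk and its boundary values satisfy |u(e^{is}) - u(e^{it})| ≤ A·|s-t|^α for all s,t ∈ ℝ and some A > 0. Then v extends continuously to the closed unit disk and its boundary values satisfy |v(e^{is}) - v(e^{it})| ≤ A'·|s-t|^α for all s,t ∈ ℝ and some constant A' > 0. -/

import Mathlib

/-!
The Hölder condition on the boundary values of `u = Re (h + g)` propagates into the disk: at each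
boundary point `e` the barrier `B · Re (1 - ē w) ^ α` dominates `|u - u(e)|` on the circle, hence on
the closed disk by the maximum principle, so `|u(w) - u(e)| ≤ C |e - w| ^ α`. Borel–Carathéodory on
the disk of radius `1 - |z|` about `z` and the Cauchy estimate turn this into
`|(h + g)'(z)| ≤ C (1 - |z|) ^ (α - 1)`, and quasiregularity transfers the bound to `(h - g)'`
because `|h' - g'| ≤ (1 + k) / (1 - k) · |h' + g'|`. By the Hardy–Littlewood argument `h - g` is
then `α`-Hölder on the disk, so it extends `α`-Hölder to the closed disk, and `v = Im (h - g)`.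
-/

open Complex Metric Set Filter Topology
open scoped Real ComplexConjugate NNReal ENNReal

theorem le_of_forall_mem_sphere_le_of_eqOn_re {p : ℂ → ℝ} {Φ : ℂ → ℂ} {c : ℂ} {R C : ℝ}
    (hR : 0 < R) (hΦ : DifferentiableOn ℂ Φ (ball c R))
    (hpΦ : EqOn p (fun z => (Φ z).re) (ball c R))
    (hp : ContinuousOn p (closedBall c R)) (hC : ∀ ζ ∈ sphere c R, p ζ ≤ C) :
    ∀ z ∈ closedBall c R, p z ≤ C := by
  obtain ⟨z₀, hz₀, hmax⟩ :=
    (isCompact_closedBall c R).exists_isMaxOn (nonempty_closedBall.2 hR.le) hp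
  suffices ∃ ζ ∈ sphere c R, p z₀ ≤ p ζ by
    obtain ⟨ζ, hζ, hz₀ζ⟩ := this
    exact fun z hz => (hmax hz).trans (hz₀ζ.trans (hC ζ hζ))
  rw [← sphere_union_ball] at hz₀
  rcases hz₀ with hz₀ | hz₀
  · exact ⟨z₀, hz₀, le_rfl⟩
  -- `‖exp ∘ Φ‖ = exp ∘ p` attains its maximum inside the ball, so it is constant there.
  have hexp_max : IsMaxOn (norm ∘ fun z => exp (Φ z)) (ball c R) z₀ := fun z hz => by
    simp only [Function.comp, norm_exp, ← hpΦ hz, ← hpΦ hz₀, mem_ofPred_eq, Real.exp_le_exp]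
    exact hmax (ball_subset_closedBall hz)
  have hconst : EqOn p (fun _ => p z₀) (ball c R) := fun z hz => by
    have := norm_eqOn_of_isPreconnected_of_isMaxOn (convex_ball c R).isPreconnected isOpen_ball
      hΦ.cexp hz₀ hexp_max hz
    simpa [norm_exp, ← hpΦ hz, ← hpΦ hz₀] using this
  have hconst' := hconst.of_subset_closure hp continuousOn_const ball_subset_closedBall
    (closure_ball c hR.ne').ge
  refine ⟨c + R, ?_, (hconst' ?_).ge⟩
  · simp [abs_of_pos hR]
  · simp [abs_of_pos hR]

theorem abs_sub_le_re_of_forall_mem_sphere {p : ℂ → ℝ} {Φ Ψ : ℂ → ℂ} {c : ℂ} {R a : ℝ}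
    (hR : 0 < R) (hΦ : DifferentiableOn ℂ Φ (ball c R))
    (hpΦ : EqOn p (fun z => (Φ z).re) (ball c R))
    (hp : ContinuousOn p (closedBall c R)) (hΨ : DiffContOnCl ℂ Ψ (ball c R))
    (hbd : ∀ ζ ∈ sphere c R, |p ζ - a| ≤ (Ψ ζ).re) :
    ∀ z ∈ closedBall c R, |p z - a| ≤ (Ψ z).re := by
  have hΨc : ContinuousOn (fun z => (Ψ z).re) (closedBall c R) :=
    continuous_re.comp_continuousOn (closure_ball c hR.ne' ▸ hΨ.continuousOn)
  have hupper := le_of_forall_mem_sphere_le_of_eqOn_re (p := fun z => p z - a - (Ψ z).re) (C := 0)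
    (Φ := fun z => Φ z - a - Ψ z) hR ((hΦ.sub_const _).sub hΨ.differentiableOn)
    (fun z hz => by simp [hpΦ hz]) ((hp.sub continuousOn_const).sub hΨc)
    (fun ζ hζ => by linarith [le_abs_self (p ζ - a), hbd ζ hζ])
  have hlower := le_of_forall_mem_sphere_le_of_eqOn_re (p := fun z => a - p z - (Ψ z).re) (C := 0)
    (Φ := fun z => a - Φ z - Ψ z) hR (((differentiableOn_const _).sub hΦ).sub hΨ.differentiableOn)
    (fun z hz => by simp [hpΦ hz]) ((continuousOn_const.sub hp).sub hΨc)
    (fun ζ hζ => by linarith [neg_abs_le (p ζ - a), hbd ζ hζ])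
  intro z hz
  rw [abs_le]
  constructor <;> linarith [hupper z hz, hlower z hz]

theorem Real.cos_mul_pi_div_two_pos {α : ℝ} (h0 : -1 < α) (h1 : α < 1) :
    0 < Real.cos (α * (π / 2)) :=
  Real.cos_pos_of_mem_Ioo ⟨by nlinarith [Real.pi_pos], by nlinarith [Real.pi_pos]⟩

theorem Complex.cos_mul_pi_div_two_mul_norm_rpow_le_re_cpow {α : ℝ} (hα0 : 0 ≤ α) (hα1 : α ≤ 1)
    {w : ℂ} (hw : 0 ≤ w.re) : Real.cos (α * (π / 2)) * ‖w‖ ^ α ≤ (w ^ (α : ℂ)).re := by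
  have harg : |arg w| ≤ π / 2 := abs_arg_le_pi_div_two_iff.2 hw
  have hcos : Real.cos (α * (π / 2)) ≤ Real.cos (arg w * α) := by
    rw [← Real.cos_abs (arg w * α), abs_mul, abs_of_nonneg hα0]
    apply Real.cos_le_cos_of_nonneg_of_le_pi (by positivity) (by nlinarith [Real.pi_pos])
    nlinarith
  rw [cpow_ofReal_re, mul_comm]
  exact mul_le_mul_of_nonneg_left hcos (by positivity)

theorem Complex.abs_le_pi_div_two_mul_norm_one_sub_exp {θ : ℝ} (hθ : |θ| ≤ π) :
    |θ| ≤ π / 2 * ‖1 - exp (θ * I)‖ := by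
  have hsin := Real.mul_abs_le_abs_sin (x := θ / 2) (by rw [abs_div, abs_two]; linarith)
  rw [abs_div, abs_two] at hsin
  rw [norm_sub_rev, mul_comm _ I, norm_exp_I_mul_ofReal_sub_one, norm_mul, Real.norm_eq_abs,
    Real.norm_eq_abs, abs_two]
  have := Real.pi_pos
  calc |θ| = π / 2 * (2 * (2 / π * (|θ| / 2))) := by field_simp
    _ ≤ π / 2 * (2 * |Real.sin (θ / 2)|) := by gcongr

theorem Complex.re_one_sub_conj_mul_nonneg {e w : ℂ} (he : ‖e‖ = 1) (hw : ‖w‖ ≤ 1) :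
    0 ≤ (1 - conj e * w).re := by
  have := re_le_norm (conj e * w)
  rw [norm_mul, norm_conj, he, one_mul] at this
  simp only [sub_re, one_re]
  linarith

theorem Complex.one_sub_conj_mul_mem_slitPlane {e w : ℂ} (he : ‖e‖ = 1) (hw : ‖w‖ < 1) :
    1 - conj e * w ∈ slitPlane := by
  have := re_le_norm (conj e * w)
  rw [norm_mul, norm_conj, he, one_mul] at this
  exact Or.inl (by simp only [sub_re, one_re]; linarith)

theorem Complex.norm_one_sub_conj_mul {e w : ℂ} (he : ‖e‖ = 1) : ‖1 - conj e * w‖ = ‖e - w‖ := by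
  have hee : conj e * e = 1 := by
    rw [mul_comm, mul_conj, normSq_eq_norm_sq, he]; simp
  rw [← hee, ← mul_sub, norm_mul, norm_conj, he, one_mul]

theorem diffContOnCl_one_sub_conj_mul_cpow {e : ℂ} (he : ‖e‖ = 1) {α : ℝ} (hα : 0 < α) :
    DiffContOnCl ℂ (fun w => (1 - conj e * w) ^ (α : ℂ)) (ball 0 1) := by
  refine ⟨fun w hw => ?_, fun w hw => ?_⟩
  · refine (DifferentiableAt.cpow_const (by fun_prop) ?_).differentiableWithinAt
    exact one_sub_conj_mul_mem_slitPlane he (mem_ball_zero_iff.1 hw)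
  · rw [closure_ball 0 one_ne_zero, mem_closedBall_zero_iff] at hw
    refine ContinuousAt.continuousWithinAt (ContinuousAt.comp (g := fun x : ℂ => x ^ (α : ℂ))
      ?_ (by fun_prop))
    exact continuousAt_cpow_const_of_re_pos (Or.inl (re_one_sub_conj_mul_nonneg he hw))
      (by simpa using hα)

theorem abs_sub_le_re_cpow_of_holder_on_circle {U : ℂ → ℝ} {α A : ℝ} (hα0 : 0 ≤ α)
    (hα1 : α < 1) (hA : 0 ≤ A)
    (hUcircle : ∀ s t : ℝ, |U (exp (s * I)) - U (exp (t * I))| ≤ A * |s - t| ^ α)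
    {e ζ : ℂ} (he : ‖e‖ = 1) (hζ : ‖ζ‖ = 1) :
    |U ζ - U e| ≤
      A * (π / 2) ^ α / Real.cos (α * (π / 2)) * ((1 - conj e * ζ) ^ (α : ℂ)).re := by
  have hcos := Real.cos_mul_pi_div_two_pos (by linarith) hα1
  set B := A * (π / 2) ^ α / Real.cos (α * (π / 2))
  have hBcos : B * Real.cos (α * (π / 2)) = A * (π / 2) ^ α := div_mul_cancel₀ _ hcos.ne'
  set θ := arg (conj e * ζ)
  have hθ : exp (θ * I) = conj e * ζ := by
    simpa [θ, norm_mul, he, hζ] using norm_mul_exp_arg_mul_I (conj e * ζ)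
  have he_exp : exp (arg e * I) = e := by simpa [he] using norm_mul_exp_arg_mul_I e
  have hζ_exp : exp (↑(arg e + θ) * I) = ζ := by
    have hee : e * conj e = 1 := by rw [mul_conj, normSq_eq_norm_sq, he]; simp
    rw [ofReal_add, add_mul, exp_add, he_exp, hθ, ← mul_assoc, hee, one_mul]
  calc |U ζ - U e| ≤ A * |θ| ^ α := by
        have := hUcircle (arg e + θ) (arg e)
        rwa [hζ_exp, he_exp, add_sub_cancel_left] at this
    _ ≤ A * ((π / 2) ^ α * ‖1 - conj e * ζ‖ ^ α) := by
        rw [← Real.mul_rpow (by positivity) (norm_nonneg _), ← hθ]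
        gcongr
        exact abs_le_pi_div_two_mul_norm_one_sub_exp (abs_arg_le_pi _)
    _ = B * (Real.cos (α * (π / 2)) * ‖1 - conj e * ζ‖ ^ α) := by
        rw [← mul_assoc B, hBcos, mul_assoc]
    _ ≤ B * ((1 - conj e * ζ) ^ (α : ℂ)).re := by
        gcongr
        exact cos_mul_pi_div_two_mul_norm_rpow_le_re_cpow hα0 hα1.le
          (re_one_sub_conj_mul_nonneg he hζ.le)

theorem abs_sub_le_mul_norm_sub_rpow_of_holder_on_circle {U : ℂ → ℝ} {F : ℂ → ℂ} {α A : ℝ}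
    (hα0 : 0 < α) (hα1 : α < 1) (hA : 0 ≤ A) (hF : DifferentiableOn ℂ F (ball 0 1))
    (hUF : ∀ z ∈ ball (0 : ℂ) 1, U z = (F z).re) (hU : ContinuousOn U (closedBall 0 1))
    (hUcircle : ∀ s t : ℝ, |U (exp (s * I)) - U (exp (t * I))| ≤ A * |s - t| ^ α)
    {e : ℂ} (he : ‖e‖ = 1) :
    ∀ w ∈ closedBall (0 : ℂ) 1,
      |U w - U e| ≤ A * (π / 2) ^ α / Real.cos (α * (π / 2)) * ‖e - w‖ ^ α := by
  have hcos := Real.cos_mul_pi_div_two_pos (by linarith) hα1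
  set B := A * (π / 2) ^ α / Real.cos (α * (π / 2))
  have hmax := abs_sub_le_re_of_forall_mem_sphere
    (Ψ := fun w => (B : ℂ) * (1 - conj e * w) ^ (α : ℂ)) one_pos hF hUF hU
    ((diffContOnCl_one_sub_conj_mul_cpow he hα0).const_smul (B : ℂ)) fun ζ hζ => by
      simpa using abs_sub_le_re_cpow_of_holder_on_circle hα0.le hα1 hA hUcircle he
        (mem_sphere_zero_iff_norm.1 hζ)
  intro w hw
  calc |U w - U e| ≤ B * ((1 - conj e * w) ^ (α : ℂ)).re := by simpa using hmax w hw
    _ ≤ B * ‖e - w‖ ^ α := by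
        gcongr
        rw [← norm_one_sub_conj_mul he, ← norm_cpow_real]
        exact re_le_norm _

theorem norm_deriv_le_of_re_sub_le {F : ℂ → ℂ} {z : ℂ} {r M : ℝ} (hr : 0 < r) (hM : 0 < M)
    (hF : DifferentiableOn ℂ F (ball z r)) (hre : ∀ w ∈ ball z r, (F w - F z).re ≤ M) :
    ‖deriv F z‖ ≤ 4 * M / r := by
  set f : ℂ → ℂ := fun w => F (w + z) - F z
  have hf : DifferentiableOn ℂ f (ball 0 r) :=
    (hF.comp (differentiableOn_id.add_const z) fun w hw => by simpa using hw).sub_const _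
  have hf_re : MapsTo f (ball 0 r) {w | w.re ≤ M} := fun w hw => hre _ (by simpa using hw)
  have hf_sphere : ∀ w ∈ sphere (0 : ℂ) (r / 2), ‖f w‖ ≤ 2 * M := by
    intro w hw
    have hw' : ‖w‖ = r / 2 := by simpa using hw
    have := borelCaratheodory_zero hM hf hf_re hr
      (mem_ball_zero_iff.2 (by rw [hw']; linarith)) (by simp [f])
    rwa [hw', show r - r / 2 = r / 2 by ring, mul_div_assoc, div_self (by positivity),
      mul_one] at this
  have hcauchy := norm_deriv_le_of_forall_mem_sphere_norm_le (half_pos hr)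
    (hf.diffContOnCl_ball (closedBall_subset_ball (half_lt_self hr))) hf_sphere
  have hderiv : deriv f 0 = deriv F z := by
    simp only [f, deriv_sub_const, deriv_comp_add_const, zero_add]
  rw [hderiv] at hcauchy
  calc ‖deriv F z‖ ≤ 2 * M / (r / 2) := hcauchy
    _ = 4 * M / r := by field_simp; ring

theorem norm_deriv_le_of_abs_sub_le_mul_norm_sub_rpow {U : ℂ → ℝ} {F : ℂ → ℂ} {α B : ℝ}
    (hα : 0 ≤ α) (hB : 0 < B) (hF : DifferentiableOn ℂ F (ball 0 1))
    (hUF : ∀ z ∈ ball (0 : ℂ) 1, U z = (F z).re)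
    (hU : ∀ e : ℂ, ‖e‖ = 1 → ∀ w ∈ closedBall (0 : ℂ) 1, |U w - U e| ≤ B * ‖e - w‖ ^ α) :
    ∀ z ∈ ball (0 : ℂ) 1, ‖deriv F z‖ ≤ 8 * 2 ^ α * B * (1 - ‖z‖) ^ (α - 1) := by
  intro z hz
  have hz1 : ‖z‖ < 1 := mem_ball_zero_iff.1 hz
  set d := 1 - ‖z‖
  have hd : 0 < d := by linarith
  -- `e` is the boundary point nearest to `z`.
  set e := exp (arg z * I)
  have he : ‖e‖ = 1 := norm_exp_ofReal_mul_I _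
  have hez : ‖e - z‖ = d := by
    conv_lhs => rw [← norm_mul_exp_arg_mul_I z]
    rw [← one_sub_mul, norm_mul, norm_exp_ofReal_mul_I, mul_one, ← ofReal_one, ← ofReal_sub,
      norm_real, Real.norm_of_nonneg hd.le]
  have hsub : ball z d ⊆ ball 0 1 := ball_subset_ball' (by simp [d])
  have hre : ∀ w ∈ ball z d, (F w - F z).re ≤ 2 * B * (2 * d) ^ α := by
    intro w hw
    have hew : ‖e - w‖ ≤ 2 * d := by
      have := norm_sub_le_norm_sub_add_norm_sub e z w
      rw [hez, norm_sub_rev z w] at this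
      linarith [mem_ball_iff_norm.1 hw]
    have hw_bound := hU e he w (ball_subset_closedBall (hsub hw))
    have hz_bound := hU e he z (ball_subset_closedBall hz)
    rw [sub_re, ← hUF w (hsub hw), ← hUF z hz]
    calc U w - U z ≤ |U w - U e| + |U z - U e| := by
          linarith [le_abs_self (U w - U e), neg_abs_le (U z - U e)]
      _ ≤ B * (2 * d) ^ α + B * (2 * d) ^ α := by
          gcongr
          · exact hw_bound.trans (by gcongr)
          · exact hz_bound.trans (by rw [hez]; gcongr; linarith)
      _ = 2 * B * (2 * d) ^ α := by ring
  calc ‖deriv F z‖ ≤ 4 * (2 * B * (2 * d) ^ α) / d :=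
        norm_deriv_le_of_re_sub_le hd (by positivity) (hF.mono hsub) hre
    _ = 8 * 2 ^ α * B * d ^ (α - 1) := by
        rw [Real.mul_rpow zero_le_two hd.le, Real.rpow_sub_one hd.ne']
        ring

theorem norm_sub_le_mul_norm_add_of_norm_le_mul {E : Type*} [SeminormedAddCommGroup E] {a b : E}
    {k : ℝ} (hk0 : 0 ≤ k) (hk1 : k < 1) (hab : ‖b‖ ≤ k * ‖a‖) :
    ‖a - b‖ ≤ (1 + k) / (1 - k) * ‖a + b‖ := by
  have hsub : ‖a - b‖ ≤ (1 + k) * ‖a‖ := by linarith [norm_sub_le a b]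
  have hadd : (1 - k) * ‖a‖ ≤ ‖a + b‖ := by
    have := norm_sub_le (a + b) b
    rw [add_sub_cancel_right] at this
    linarith
  rw [div_mul_eq_mul_div, le_div_iff₀ (by linarith)]
  nlinarith

theorem norm_deriv_sub_le_mul_norm_deriv_add {𝕜 E : Type*} [NontriviallyNormedField 𝕜]
    [NormedAddCommGroup E] [NormedSpace 𝕜 E] {h g : 𝕜 → E} {z : 𝕜} {k : ℝ} (hk0 : 0 ≤ k)
    (hk1 : k < 1) (hh : DifferentiableAt 𝕜 h z) (hg : DifferentiableAt 𝕜 g z)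
    (hhg : ‖deriv g z‖ ≤ k * ‖deriv h z‖) :
    ‖deriv (h - g) z‖ ≤ (1 + k) / (1 - k) * ‖deriv (h + g) z‖ := by
  rw [deriv_sub hh hg, deriv_add hh hg]
  exact norm_sub_le_mul_norm_add_of_norm_le_mul hk0 hk1 hhg

theorem Real.rpow_one_sub_mul_sub_rpow_one_sub_le {α r s : ℝ} (hα0 : 0 ≤ α) (hα1 : α ≤ 1)
    (hr0 : 0 ≤ r) (hr1 : r ≤ 1) (hs1 : s ≤ 1) :
    (1 - s * r) ^ α - (1 - r) ^ α ≤ (1 - s) ^ α := by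
  have hrs : 0 ≤ r * (1 - s) := mul_nonneg hr0 (sub_nonneg.2 hs1)
  have hsub := Real.rpow_add_le_add_rpow (sub_nonneg.2 hr1) hrs hα0 hα1
  have hle : (r * (1 - s)) ^ α ≤ (1 - s) ^ α :=
    Real.rpow_le_rpow hrs (mul_le_of_le_one_left (sub_nonneg.2 hs1) hr1) hα0
  rw [show 1 - s * r = (1 - r) + r * (1 - s) by ring]
  linarith

section HardyLittlewood

variable {G : ℂ → ℂ} {α C : ℝ}

theorem norm_sub_le_of_norm_deriv_le_of_mem_closedBall (hα : α ≤ 1) (hC : 0 ≤ C)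
    (hG : DifferentiableOn ℂ G (ball 0 1))
    (hbd : ∀ z ∈ ball (0 : ℂ) 1, ‖deriv G z‖ ≤ C * (1 - ‖z‖) ^ (α - 1)) {ρ : ℝ} (hρ : ρ < 1)
    {x y : ℂ} (hx : x ∈ closedBall (0 : ℂ) ρ) (hy : y ∈ closedBall (0 : ℂ) ρ) :
    ‖G x - G y‖ ≤ C * (1 - ρ) ^ (α - 1) * ‖x - y‖ := by
  have hsub : closedBall (0 : ℂ) ρ ⊆ ball 0 1 := closedBall_subset_ball hρ
  refine (convex_closedBall 0 ρ).norm_image_sub_le_of_norm_deriv_le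
    (fun u hu => hG.differentiableAt (isOpen_ball.mem_nhds (hsub hu))) (fun u hu => ?_) hy hx
  calc ‖deriv G u‖ ≤ C * (1 - ‖u‖) ^ (α - 1) := hbd u (hsub hu)
    _ ≤ C * (1 - ρ) ^ (α - 1) := by
        have hu' : ‖u‖ ≤ ρ := mem_closedBall_zero_iff.1 hu
        exact mul_le_mul_of_nonneg_left
          (Real.rpow_le_rpow_of_nonpos (sub_pos.2 hρ) (by linarith) (by linarith)) hC

theorem norm_sub_le_of_norm_deriv_le_radial (hα0 : 0 < α) (hα1 : α ≤ 1) (hC : 0 ≤ C)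
    (hG : DifferentiableOn ℂ G (ball 0 1))
    (hbd : ∀ z ∈ ball (0 : ℂ) 1, ‖deriv G z‖ ≤ C * (1 - ‖z‖) ^ (α - 1))
    {z : ℂ} (hz : z ∈ ball (0 : ℂ) 1) {s : ℝ} (hs0 : 0 ≤ s) (hs1 : s ≤ 1) :
    ‖G z - G (s * z)‖ ≤ C / α * (1 - s) ^ α := by
  set r := ‖z‖
  have hr1 : r < 1 := mem_ball_zero_iff.1 hz
  have hpos : ∀ τ ∈ Icc s 1, 0 < 1 - τ * r := fun τ hτ => by nlinarith [norm_nonneg z, hτ.2]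
  have hmem : ∀ τ ∈ Icc s 1, (τ : ℂ) * z ∈ ball (0 : ℂ) 1 := fun τ hτ => by
    rw [mem_ball_zero_iff, norm_mul, norm_real, Real.norm_of_nonneg (hs0.trans hτ.1)]
    linarith [hpos τ hτ]
  have hf : ∀ τ ∈ Icc s 1,
      HasDerivAt (fun τ : ℝ => G (τ * z) - G (s * z)) (deriv G (τ * z) * z) τ := by
    intro τ hτ
    have hGτ := (hG.differentiableAt (isOpen_ball.mem_nhds (hmem τ hτ))).hasDerivAt
    exact ((hGτ.comp (τ : ℂ) ((hasDerivAt_id (τ : ℂ)).mul_const z)).comp_ofReal.sub_const _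
      ).congr_deriv (by simp)
  -- `B` is the primitive of the bound `C (1 - τ r) ^ (α - 1) r` on `‖d/dτ G (τ z)‖` with `B s = 0`.
  set B : ℝ → ℝ := fun τ => C / α * ((1 - s * r) ^ α - (1 - τ * r) ^ α)
  have hB : ∀ τ ∈ Icc s 1, HasDerivAt B (C * (1 - τ * r) ^ (α - 1) * r) τ := by
    intro τ hτ
    have := ((((hasDerivAt_id τ).mul_const r).const_sub 1).rpow_const
      (p := α) (Or.inl (hpos τ hτ).ne')).const_sub ((1 - s * r) ^ α) |>.const_mul (C / α)
    exact this.congr_deriv (by simp only [id]; field_simp)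
  have hbound : ∀ τ ∈ Ico s 1, ‖deriv G (τ * z) * z‖ ≤ C * (1 - τ * r) ^ (α - 1) * r := by
    intro τ hτ
    have hτ' := Ico_subset_Icc_self hτ
    rw [norm_mul]
    gcongr
    simpa [norm_mul, Real.norm_of_nonneg (hs0.trans hτ.1)] using hbd _ (hmem τ hτ')
  have hmain := image_norm_le_of_norm_deriv_right_le_deriv_boundary'
    (f := fun τ : ℝ => G (τ * z) - G (s * z))
    (fun τ hτ => (hf τ hτ).continuousAt.continuousWithinAt)
    (fun τ hτ => (hf τ (Ico_subset_Icc_self hτ)).hasDerivWithinAt)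
    (B := B) (by simp [B]) (fun τ hτ => (hB τ hτ).continuousAt.continuousWithinAt)
    (fun τ hτ => (hB τ (Ico_subset_Icc_self hτ)).hasDerivWithinAt) hbound
    (right_mem_Icc.2 hs1)
  simp only [ofReal_one, one_mul, B] at hmain
  calc ‖G z - G (s * z)‖ ≤ C / α * ((1 - s * r) ^ α - (1 - r) ^ α) := hmain
    _ ≤ C / α * (1 - s) ^ α := by
        gcongr
        exact Real.rpow_one_sub_mul_sub_rpow_one_sub_le hα0.le hα1 (norm_nonneg z) hr1.le hs1

theorem norm_sub_le_of_norm_deriv_le (hα0 : 0 < α) (hα1 : α ≤ 1) (hC : 0 ≤ C)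
    (hG : DifferentiableOn ℂ G (ball 0 1))
    (hbd : ∀ z ∈ ball (0 : ℂ) 1, ‖deriv G z‖ ≤ C * (1 - ‖z‖) ^ (α - 1))
    {z w : ℂ} (hz : z ∈ ball (0 : ℂ) 1) (hw : w ∈ ball (0 : ℂ) 1) :
    ‖G z - G w‖ ≤ (2 / α + 2) * C * ‖z - w‖ ^ α := by
  rcases eq_or_ne z w with rfl | hzw
  · simp [Real.zero_rpow hα0.ne']
  -- Move both points radially inwards by `δ = ‖z - w‖ / 2`, then compare them at radius `1 - δ`.
  set δ := ‖z - w‖ / 2 with hδ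
  have hδ0 : 0 < δ := by simpa [δ, sub_eq_zero] using hzw
  have hδ1 : δ < 1 := by
    have := norm_sub_le z w
    linarith [mem_ball_zero_iff.1 hz, mem_ball_zero_iff.1 hw]
  set s := 1 - δ
  have hs0 : 0 ≤ s := by linarith
  have hscaled : ∀ u ∈ ball (0 : ℂ) 1, (s : ℂ) * u ∈ closedBall (0 : ℂ) s := fun u hu => by
    rw [mem_closedBall_zero_iff, norm_mul, norm_real, Real.norm_of_nonneg hs0]
    exact mul_le_of_le_one_right hs0 (mem_ball_zero_iff.1 hu).le
  have hrad_z := norm_sub_le_of_norm_deriv_le_radial hα0 hα1 hC hG hbd hz hs0 (by linarith)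
  have hrad_w := norm_sub_le_of_norm_deriv_le_radial hα0 hα1 hC hG hbd hw hs0 (by linarith)
  have hmid := norm_sub_le_of_norm_deriv_le_of_mem_closedBall hα1 hC hG hbd (by linarith : s < 1)
    (hscaled z hz) (hscaled w hw)
  have hmid' : ‖(s : ℂ) * z - s * w‖ ≤ 2 * δ := by
    rw [← mul_sub, norm_mul, norm_real, Real.norm_of_nonneg hs0]
    nlinarith [norm_nonneg (z - w)]
  have hδα : δ ^ (α - 1) * (2 * δ) = 2 * δ ^ α := by
    rw [Real.rpow_sub_one hδ0.ne']; field_simp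
  have h1s : 1 - s = δ := sub_sub_cancel 1 δ
  rw [h1s] at hrad_z hrad_w hmid
  calc ‖G z - G w‖ ≤ ‖G z - G (s * z)‖ + ‖G (s * z) - G (s * w)‖ + ‖G w - G (s * w)‖ := by
        rw [norm_sub_rev (G w)]
        linarith [norm_sub_le_norm_sub_add_norm_sub (G z) (G (s * z)) (G w),
          norm_sub_le_norm_sub_add_norm_sub (G (s * z)) (G (s * w)) (G w)]
    _ ≤ C / α * δ ^ α + C * δ ^ (α - 1) * (2 * δ) + C / α * δ ^ α := by
        gcongr
        exact hmid.trans (by gcongr)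
    _ = (2 / α + 2) * C * δ ^ α := by rw [mul_assoc C, hδα]; ring
    _ ≤ (2 / α + 2) * C * ‖z - w‖ ^ α := by
        gcongr
        linarith

end HardyLittlewood

theorem holderOnWith_of_dist_le {X Y : Type*} [PseudoMetricSpace X] [PseudoMetricSpace Y]
    {f : X → Y} {s : Set X} {C α : ℝ} (hC : 0 ≤ C) (hα : 0 ≤ α)
    (hf : ∀ x ∈ s, ∀ y ∈ s, dist (f x) (f y) ≤ C * dist x y ^ α) :
    HolderOnWith C.toNNReal α.toNNReal f s := by
  intro x hx y hy
  rw [edist_dist, edist_dist, Real.coe_toNNReal α hα,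
    ENNReal.ofReal_rpow_of_nonneg dist_nonneg hα, ENNReal.ofNNReal_toNNReal,
    ← ENNReal.ofReal_mul hC]
  exact ENNReal.ofReal_le_ofReal (hf x hx y hy)

theorem HolderOnWith.extendFrom_closure {X Y : Type*} [PseudoEMetricSpace X] [EMetricSpace Y]
    [CompleteSpace Y] {f : X → Y} {s : Set X} {C r : ℝ≥0} (hf : HolderOnWith C r f s)
    (hr : 0 < r) : HolderOnWith C r (extendFrom s f) (closure s) := by
  have hlim : ∀ x ∈ closure s, ∃ y, Tendsto f (𝓝[s] x) (𝓝 y) := by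
    intro x hx
    have := mem_closure_iff_nhdsWithin_neBot.1 hx
    refine CompleteSpace.complete (cauchy_map_iff'.2 ((hf.uniformContinuousOn hr).mono_left ?_))
    exact le_inf (cauchy_nhds.mono nhdsWithin_le_nhds).2
      (le_principal_iff.2 (prod_mem_prod self_mem_nhdsWithin self_mem_nhdsWithin))
  have hcont := continuousOn_extendFrom subset_rfl hlim
  have hext := extendFrom_extends (hf.continuousOn hr)
  intro x hx y hy
  have hxy : (x, y) ∈ closure (s ×ˢ s) := by rw [closure_prod_eq]; exact ⟨hx, hy⟩
  have hfst : ContinuousWithinAt (extendFrom s f ∘ Prod.fst) (s ×ˢ s) (x, y) :=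
    ((hcont x hx).mono subset_closure).comp continuousWithinAt_fst fun _ hp => hp.1
  have hsnd : ContinuousWithinAt (extendFrom s f ∘ Prod.snd) (s ×ˢ s) (x, y) :=
    ((hcont y hy).mono subset_closure).comp continuousWithinAt_snd fun _ hp => hp.2
  refine ContinuousWithinAt.closure_le
    (f := fun p : X × X => edist (extendFrom s f p.1) (extendFrom s f p.2))
    (g := fun p : X × X => C * edist p.1 p.2 ^ (r : ℝ)) hxy (hfst.edist hsnd) ?_ ?_
  · exact ((ENNReal.continuous_const_mul ENNReal.coe_ne_top).comp
      ((ENNReal.continuous_rpow_const).comp continuous_edist)).continuousWithinAt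
  · rintro ⟨x', y'⟩ ⟨hx', hy'⟩
    simpa only [hext x' hx', hext y' hy'] using hf x' hx' y' hy'

theorem Complex.norm_exp_mul_I_sub_exp_mul_I_le (s t : ℝ) :
    ‖exp (s * I) - exp (t * I)‖ ≤ |s - t| := by
  have : exp (s * I) - exp (t * I) = exp (t * I) * (exp (I * ↑(s - t)) - 1) := by
    rw [mul_sub, ← exp_add, mul_one]
    push_cast
    ring_nf
  rw [this, norm_mul, norm_exp_ofReal_mul_I, one_mul, ← Real.norm_eq_abs]
  exact Real.norm_exp_I_mul_ofReal_sub_one_le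

theorem HolderOnWith.abs_im_sub_le_of_exp_mul_I {f : ℂ → ℂ} {C r : ℝ≥0}
    (hf : HolderOnWith C r f (closedBall 0 1)) (s t : ℝ) :
    |(f (exp (s * I))).im - (f (exp (t * I))).im| ≤ C * |s - t| ^ (r : ℝ) := by
  have hmem : ∀ u : ℝ, exp (u * I) ∈ closedBall (0 : ℂ) 1 := fun u => by simp
  calc |(f (exp (s * I))).im - (f (exp (t * I))).im|
        ≤ dist (f (exp (s * I))) (f (exp (t * I))) := by
        rw [dist_eq_norm, ← sub_im]
        exact abs_im_le_norm _
    _ ≤ C * dist (exp (s * I)) (exp (t * I)) ^ (r : ℝ) := hf.dist_le (hmem s) (hmem t)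
    _ ≤ C * |s - t| ^ (r : ℝ) := by
        gcongr
        rw [dist_eq_norm]
        exact norm_exp_mul_I_sub_exp_mul_I_le s t

theorem stmt11 (α : ℝ) (hα0 : 0 < α) (hα1 : α < 1)
    (h g : ℂ → ℂ) (k : ℝ) (hk0 : 0 ≤ k) (hk1 : k < 1)
    (hh : DifferentiableOn ℂ h (ball (0:ℂ) 1))
    (hg : DifferentiableOn ℂ g (ball (0:ℂ) 1))
    (hqr : ∀ z ∈ ball (0:ℂ) 1, ‖deriv g z‖ ≤ k * ‖deriv h z‖)
    (U : ℂ → ℝ) (A : ℝ) (hA : 0 < A)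
    (hUcont : ContinuousOn U (closedBall (0:ℂ) 1))
    (hUeq : ∀ z ∈ ball (0:ℂ) 1, U z = (h z + (starRingEnd ℂ) (g z)).re)
    (hUHolder : ∀ s t : ℝ,
      |U (Complex.exp (s * Complex.I)) - U (Complex.exp (t * Complex.I))| ≤ A * |s - t| ^ α) :
    ∃ V : ℂ → ℝ, ∃ A' > 0,
      ContinuousOn V (closedBall (0:ℂ) 1) ∧
      (∀ z ∈ ball (0:ℂ) 1, V z = (h z + (starRingEnd ℂ) (g z)).im) ∧
      (∀ s t : ℝ,
        |V (Complex.exp (s * Complex.I)) - V (Complex.exp (t * Complex.I))| ≤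
          A' * |s - t| ^ α) := by
  have hUF : ∀ z ∈ ball (0 : ℂ) 1, U z = (h z + g z).re := fun z hz => by simp [hUeq z hz]
  have hcos := Real.cos_mul_pi_div_two_pos (by linarith) hα1
  have hk : 0 < (1 + k) / (1 - k) := div_pos (by linarith) (by linarith)
  set C := (1 + k) / (1 - k) * (8 * 2 ^ α * (A * (π / 2) ^ α / Real.cos (α * (π / 2))))
  have hderiv_add := norm_deriv_le_of_abs_sub_le_mul_norm_sub_rpow hα0.le (by positivity)
    (hh.add hg) hUF fun e he =>
      abs_sub_le_mul_norm_sub_rpow_of_holder_on_circle hα0 hα1 hA.le (hh.add hg) hUF hUcont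
        hUHolder he
  have hderiv_sub : ∀ z ∈ ball (0 : ℂ) 1, ‖deriv (h - g) z‖ ≤ C * (1 - ‖z‖) ^ (α - 1) :=
    fun z hz => by
      rw [mul_assoc]
      exact (norm_deriv_sub_le_mul_norm_deriv_add hk0 hk1
        (hh.differentiableAt (isOpen_ball.mem_nhds hz))
        (hg.differentiableAt (isOpen_ball.mem_nhds hz)) (hqr z hz)).trans
        (mul_le_mul_of_nonneg_left (hderiv_add z hz) hk.le)
  set A' := (2 / α + 2) * C
  have hA' : 0 < A' := by positivity
  have hholder :
      HolderOnWith A'.toNNReal α.toNNReal (extendFrom (ball 0 1) (h - g)) (closedBall 0 1) := by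
    rw [← closure_ball 0 one_ne_zero]
    refine (holderOnWith_of_dist_le hA'.le hα0.le fun z hz w hw => ?_).extendFrom_closure
      (Real.toNNReal_pos.2 hα0)
    rw [dist_eq_norm, dist_eq_norm]
    exact norm_sub_le_of_norm_deriv_le hα0 hα1.le (by positivity) (hh.sub hg) hderiv_sub hz hw
  refine ⟨fun z => (extendFrom (ball 0 1) (h - g) z).im, A', hA',
    continuous_im.comp_continuousOn (hholder.continuousOn (Real.toNNReal_pos.2 hα0)),
    fun z hz => ?_, fun s t => ?_⟩
  · show (extendFrom (ball 0 1) (h - g) z).im = _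
    rw [extendFrom_extends (hh.sub hg).continuousOn z hz]
    simp [sub_eq_add_neg]
  · simpa [Real.coe_toNNReal _ hA'.le, Real.coe_toNNReal _ hα0.le] using
      hholder.abs_im_sub_le_of_exp_mul_I s t
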